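/- arXiv:1508.02625 — 6 statements merged into one kernel-verified Lean document; each statement's English description precedes it below -/
import Mathlib

section
/- Let a ≥ 2 be an integer and let Φ = (1 + √5)/2 be the golden ratio. Then for every natural number k, the number of Fibonacci numbers lying in the interval [a^k, a^(k+1)) is either ⌊(log a)/(log Φ)⌋ or ⌈(log a)/(log Φ)⌉. -/
/-!
By Binet's formula `F (m + j) = φ ^ j * F m + ψ ^ m * F j`, where the error term
`|ψ ^ m * F j| = F j / φ ^ m` is small. If the Fibonacci numbers in `[A, a * A)` are
`F (n + 1), …, F (n + c)`, the integrality bounds `F n + 1 ≤ A` and `F (n + c) + 1 ≤ a * A`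
turn this into `φ ^ (c - 1) < a < φ ^ (c + 1)`, i.e. `|log_φ a - c| < 1`, which leaves only
`⌊log_φ a⌋` and `⌈log_φ a⌉` for `c`. The lower bound needs the error `ψ ^ (n + 1) * F (c - 1)`
to be below `1`, which holds once `c ≤ n + 1`. When `a ≤ A = a ^ k` (i.e. `k ≥ 1`) this follows
from `F (n + c) < a * A ≤ F (n + 1) ^ 2 ≤ F (2 * n + 1)`; the interval `[1, a)` is handled directly.
-/

noncomputable def Phi : ℝ := (1 + Real.sqrt 5) / 2

open Real goldenRatio Set
open Nat (fib)

lemma coe_fib_add (m j : ℕ) : (fib (m + j) : ℝ) = φ ^ j * fib m + ψ ^ m * fib j := by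
  rw [coe_fib_eq, coe_fib_eq, coe_fib_eq]
  field_simp
  ring

lemma fib_add_two_lt_goldenRatio_pow (n : ℕ) : (fib (n + 2) : ℝ) < φ ^ (n + 1) := by
  have hψ : ψ * fib (n + 1) < 0 :=
    mul_neg_of_neg_of_pos goldenConj_neg (Nat.cast_pos.2 (Nat.fib_pos.2 n.succ_pos))
  linarith [fib_succ_sub_goldenConj_mul_fib (n + 1)]

lemma goldenRatio_pow_le_fib_add_two (n : ℕ) : φ ^ n ≤ fib (n + 2) := by
  have hψ : 0 ≤ ψ ^ 2 * fib n := by positivity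
  rw [add_comm, coe_fib_add]
  simpa using hψ

lemma fib_lt_goldenRatio_pow : ∀ n : ℕ, (fib n : ℝ) < φ ^ n
  | 0 => by simp
  | 1 => by simpa using one_lt_goldenRatio
  | n + 2 =>
    (fib_add_two_lt_goldenRatio_pow n).trans (pow_lt_pow_right₀ one_lt_goldenRatio (by omega))

lemma abs_goldenConj_pow_mul (m : ℕ) (x : ℝ) : |ψ ^ m * x| = |x| / φ ^ m := by
  rw [abs_mul, abs_pow, abs_of_neg goldenConj_neg, ← inv_goldenRatio, inv_pow, inv_mul_eq_div]

lemma lt_goldenRatio_pow_mul_of_le_fib {n c A B : ℕ} (hA : fib n < A)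
    (hB : B ≤ fib (n + (c + 1))) : (B : ℝ) < φ ^ (c + 1) * A := by
  have hA' : (fib n : ℝ) + 1 ≤ A := by exact_mod_cast hA
  have herr : ψ ^ n * fib (c + 1) < φ ^ (c + 1) := calc
    ψ ^ n * fib (c + 1) ≤ |ψ ^ n * fib (c + 1)| := le_abs_self _
    _ = fib (c + 1) / φ ^ n := by rw [abs_goldenConj_pow_mul, Nat.abs_cast]
    _ ≤ fib (c + 1) := div_le_self (by positivity) (one_le_pow₀ one_lt_goldenRatio.le)
    _ < φ ^ (c + 1) := fib_lt_goldenRatio_pow _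
  calc (B : ℝ) ≤ fib (n + (c + 1)) := by exact_mod_cast hB
    _ = φ ^ (c + 1) * fib n + ψ ^ n * fib (c + 1) := coe_fib_add n (c + 1)
    _ < φ ^ (c + 1) * (fib n + 1) := by linarith
    _ ≤ φ ^ (c + 1) * A := by gcongr

lemma goldenRatio_pow_mul_lt_of_fib_lt {m d A B : ℕ} (hA : A ≤ fib m) (hB : fib (m + d) < B)
    (hd : d < m) : φ ^ d * A < B := by
  have hB' : (fib (m + d) : ℝ) + 1 ≤ B := by exact_mod_cast hB
  have herr : |ψ ^ m * fib d| < 1 := by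
    rw [abs_goldenConj_pow_mul, Nat.abs_cast, div_lt_one (by positivity)]
    exact (fib_lt_goldenRatio_pow d).trans (pow_lt_pow_right₀ one_lt_goldenRatio hd)
  calc φ ^ d * A ≤ φ ^ d * fib m := by gcongr
    _ = fib (m + d) - ψ ^ m * fib d := by rw [coe_fib_add]; ring
    _ < B := by linarith [neg_abs_le (ψ ^ m * fib d)]

lemma exists_fib_lt_le {x : ℕ} (hx : 0 < x) : ∃ n, fib n < x ∧ x ≤ fib (n + 1) := by
  classical
  have hex : ∃ n, x ≤ fib n := ⟨x + 5, (Nat.le_add_right x 5).trans (Nat.le_fib_self (by omega))⟩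
  obtain ⟨n, hn⟩ := Nat.exists_eq_add_one_of_ne_zero (Nat.find_pos hex |>.2 (by simp; omega)).ne'
  exact ⟨n, not_le.1 (Nat.find_min hex (by omega)), hn ▸ Nat.find_spec hex⟩

lemma le_fib_iff_lt {x n j : ℕ} (h₁ : fib n < x) (h₂ : x ≤ fib (n + 1)) : x ≤ fib j ↔ n < j :=
  ⟨fun h => Nat.fib_mono.reflect_lt (h₁.trans_le h), fun h => h₂.trans (Nat.fib_mono h)⟩

lemma range_fib_inter_Ico_eq_image {A B n N : ℕ} (hA₁ : fib n < A) (hA₂ : A ≤ fib (n + 1))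
    (hB₁ : fib N < B) (hB₂ : B ≤ fib (N + 1)) : range fib ∩ Ico A B = fib '' Ioc n N := by
  have hA := fun j => le_fib_iff_lt (j := j) hA₁ hA₂
  have hB := fun j => le_fib_iff_lt (j := j) hB₁ hB₂
  ext x
  constructor
  · rintro ⟨⟨j, rfl⟩, hAj, hBj⟩
    exact ⟨j, ⟨(hA j).1 hAj, not_lt.1 (mt (hB j).2 (not_le.2 hBj))⟩, rfl⟩
  · rintro ⟨j, ⟨hnj, hjN⟩, rfl⟩
    exact ⟨⟨j, rfl⟩, (hA j).2 hnj, not_le.1 (mt (hB j).1 (not_lt.2 hjN))⟩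

lemma ncard_image_fib_Ioc {n N : ℕ} (hn : 1 ≤ n) : (fib '' Ioc n N).ncard = N - n := by
  have hsub : Ioc n N ⊆ Ici 2 := fun _ hj => hn.trans_lt hj.1
  rw [(Nat.fib_strictMonoOn.injOn.mono hsub).ncard_image, ncard_Ioc_nat]

lemma Int.eq_floor_or_eq_ceil_of_abs_sub_lt_one {α : Type*} [Field α] [LinearOrder α]
    [IsStrictOrderedRing α] [FloorRing α] {x : α} {c : ℤ} (h : |x - c| < 1) :
    c = ⌊x⌋ ∨ c = ⌈x⌉ := by
  rw [abs_sub_lt_iff] at h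
  have h₁ : ⌊x⌋ < c + 1 := Int.floor_lt.2 (by push_cast; linarith)
  have h₂ : c - 1 < ⌈x⌉ := Int.lt_ceil.2 (by push_cast; linarith)
  have := Int.ceil_le_floor_add_one x
  have := Int.floor_le_ceil x
  omega

lemma abs_logb_sub_lt_one {b x : ℝ} {c : ℕ} (hb : 1 < b) (hlo : b ^ c < b * x)
    (hup : x < b ^ (c + 1)) : |logb b x - c| < 1 := by
  have hb₀ : 0 < b := by linarith
  have hx : 0 < x := pos_of_mul_pos_right ((pow_pos hb₀ c).trans hlo) hb₀.le
  have h₁ := logb_lt_logb hb (by positivity) hlo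
  have h₂ := logb_lt_logb hb hx hup
  rw [logb_pow, logb_self_eq_one hb, logb_mul hb₀.ne' hx.ne', logb_self_eq_one hb] at h₁
  rw [logb_pow, logb_self_eq_one hb] at h₂
  rw [abs_sub_lt_iff]
  push_cast at h₁ h₂
  constructor <;> linarith

lemma goldenRatio_pow_bounds_of_ncard_Ico_one {a c : ℕ} (ha : 2 ≤ a)
    (hc : (range fib ∩ Ico 1 a).ncard = c) : φ ^ c < φ * a ∧ (a : ℝ) < φ ^ (c + 1) := by
  obtain ⟨N, hN₁, hN₂⟩ := exists_fib_lt_le (by omega : 0 < a)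
  have hN : 2 ≤ N := by
    by_contra! h
    interval_cases N <;> simp at hN₂ <;> omega
  obtain ⟨d, rfl⟩ := Nat.exists_eq_add_of_le' hN
  have himage : fib '' Ioc 0 (d + 2) = fib '' Ioc 1 (d + 2) := by
    refine (image_mono (Ioc_subset_Ioc_left zero_le_one)).antisymm' ?_
    rintro _ ⟨j, ⟨hj₀, hj⟩, rfl⟩
    obtain rfl | hj₁ := (Nat.one_le_iff_ne_zero.2 hj₀.ne').eq_or_lt
    · exact ⟨2, ⟨one_lt_two, by omega⟩, rfl⟩
    · exact ⟨j, ⟨hj₁, hj⟩, rfl⟩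
  rw [range_fib_inter_Ico_eq_image (n := 0) (by simp) (by simp) hN₁ hN₂, himage,
    ncard_image_fib_Ioc le_rfl] at hc
  subst hc
  have hlo : (fib (d + 2) : ℝ) < a := by exact_mod_cast hN₁
  have hup : (a : ℝ) ≤ fib (d + 3) := by exact_mod_cast hN₂
  constructor
  · rw [show d + 2 - 1 = d + 1 by omega, pow_succ']
    gcongr
    exact (goldenRatio_pow_le_fib_add_two d).trans_lt hlo
  · rw [show d + 2 - 1 + 1 = d + 1 + 1 by omega]
    exact hup.trans_lt (fib_add_two_lt_goldenRatio_pow (d + 1))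

lemma goldenRatio_pow_bounds_of_ncard_Ico_mul {A a c : ℕ} (hA : 2 ≤ A) (ha : 1 ≤ a)
    (haA : a ≤ A) (hc : (range fib ∩ Ico A (A * a)).ncard = c) :
    φ ^ c < φ * a ∧ (a : ℝ) < φ ^ (c + 1) := by
  obtain ⟨n, hn₁, hn₂⟩ := exists_fib_lt_le (by omega : 0 < A)
  obtain ⟨N, hN₁, hN₂⟩ := exists_fib_lt_le (by positivity : 0 < A * a)
  have hn : 1 ≤ n := Nat.one_le_iff_ne_zero.2 <| by
    rintro rfl
    simp at hn₂
    omega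
  have hnN : n ≤ N := Nat.lt_succ_iff.1 <| Nat.fib_mono.reflect_lt <|
    hn₁.trans_le ((Nat.le_mul_of_pos_right A ha).trans hN₂)
  have hN : N < 2 * n + 1 := Nat.fib_mono.reflect_lt <| calc
    fib N < A * a := hN₁
    _ ≤ fib (n + 1) * fib (n + 1) := Nat.mul_le_mul hn₂ (haA.trans hn₂)
    _ ≤ fib (2 * n + 1) := by rw [Nat.fib_two_mul_add_one]; nlinarith
  rw [range_fib_inter_Ico_eq_image hn₁ hn₂ hN₁ hN₂, ncard_image_fib_Ioc hn] at hc
  subst hc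
  have hA₀ : (0 : ℝ) < A := by positivity
  constructor
  · obtain hNn | hNn := hnN.eq_or_lt
    · rw [hNn, Nat.sub_self, pow_zero]
      exact one_lt_mul_of_lt_of_le one_lt_goldenRatio (by exact_mod_cast ha)
    · have key := goldenRatio_pow_mul_lt_of_fib_lt (d := N - n - 1) hn₂
        (by rwa [show n + 1 + (N - n - 1) = N by omega]) (by omega)
      push_cast at key
      rw [show N - n = N - n - 1 + 1 by omega, pow_succ']
      gcongr
      exact lt_of_mul_lt_mul_left (by linarith) hA₀.le
  · have key := lt_goldenRatio_pow_mul_of_le_fib (c := N - n) (B := A * a) hn₁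
      (by rwa [show n + (N - n + 1) = N + 1 by omega])
    push_cast at key
    exact lt_of_mul_lt_mul_left (by linarith) hA₀.le

/-- For any integer `a ≥ 2` and any natural number `k`, the number of Fibonacci numbers
in the interval `[a^k, a^(k+1))` is either `⌊log a / log Φ⌋` or `⌈log a / log Φ⌉`. -/
theorem fib_count_in_power_interval (a : ℕ) (ha : 2 ≤ a) (k : ℕ) :
    ((Set.range Nat.fib ∩ Set.Ico (a ^ k) (a ^ (k + 1))).ncard : ℤ)
        = ⌊Real.log a / Real.log Phi⌋ ∨
    ((Set.range Nat.fib ∩ Set.Ico (a ^ k) (a ^ (k + 1))).ncard : ℤ)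
        = ⌈Real.log a / Real.log Phi⌉ := by
  obtain ⟨c, hc⟩ : ∃ c, (range fib ∩ Ico (a ^ k) (a ^ (k + 1))).ncard = c := ⟨_, rfl⟩
  have hbounds : φ ^ c < φ * a ∧ (a : ℝ) < φ ^ (c + 1) := by
    rcases k with _ | k
    · rw [pow_zero, zero_add, pow_one] at hc
      exact goldenRatio_pow_bounds_of_ncard_Ico_one ha hc
    · rw [pow_succ] at hc
      have haA : a ≤ a ^ (k + 1) := Nat.le_self_pow k.succ_ne_zero a
      exact goldenRatio_pow_bounds_of_ncard_Ico_mul (ha.trans haA) (by omega) haA hc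
  rw [hc, show Phi = φ from rfl, log_div_log]
  exact Int.eq_floor_or_eq_ceil_of_abs_sub_lt_one
    (by exact_mod_cast abs_logb_sub_lt_one one_lt_goldenRatio hbounds.1 hbounds.2)
end

section
/- Let a ≥ 2 be an integer and let Φ = (1 + √5)/2. The set A of natural numbers k for which the interval [a^k, a^(k+1)) contains exactly ⌊(log a)/(log Φ)⌋ Fibonacci numbers has natural density equal to 1 − ⟨(log a)/(log Φ)⟩, i.e., the limit as N → ∞ of card(A ∩ [0, N))/N exists and equals 1 − ⟨(log a)/(log Φ)⟩, where ⟨x⟩ denotes the fractional part of x. -/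
/-!
Let `n(x)` be the least index with `x ≤ F_{n(x)}`. For `k ≥ 1` the interval `[a^k, a^(k+1))`
contains exactly `d(k) = n(a^(k+1)) - n(a^k)` Fibonacci numbers. Binet's formula
`|√5 F_n - Φ^n| ≤ 1` pins `n(a^k)` down to `k L + log_Φ √5 + θ_k` with `θ_k ∈ (-o(1), 1)`,
where `L = log_Φ a`. Since `a` is never a power of `Φ`, `L` is not an integer, so
eventually `d(k) ∈ {⌊L⌋, ⌊L⌋ + 1}`. Then `1_{d(k) = ⌊L⌋} = (⌊L⌋ + 1) - d(k)` telescopes,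
and its Cesàro mean tends to `⌊L⌋ + 1 - L = 1 - ⟨L⟩` because `n(a^N) / N → L`.
-/

open Filter

open Real Set Topology
open scoped goldenRatio

namespace Real

theorem one_lt_sqrt_five : 1 < √5 := by
  rw [lt_sqrt zero_le_one]
  norm_num

theorem irrational_goldenRatio_pow {n : ℕ} (hn : n ≠ 0) : Irrational (φ ^ n) := by
  obtain ⟨m, rfl⟩ := Nat.exists_eq_succ_of_ne_zero hn
  rw [← goldenRatio_mul_fib_succ_add_fib]
  exact (goldenRatio_irrational.mul_natCast (Nat.fib_pos.2 m.succ_pos).ne').add_natCast _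

theorem fract_logb_goldenRatio_natCast_pos {a : ℕ} (ha : 1 < a) :
    0 < Int.fract (logb φ a) := by
  have ha' : (1 : ℝ) < a := by exact_mod_cast ha
  rw [Int.fract_pos]
  intro h
  have hpos : (0 : ℤ) < ⌊logb φ a⌋ := by
    exact_mod_cast h ▸ logb_pos one_lt_goldenRatio ha'
  lift ⌊logb φ a⌋ to ℕ using hpos.le with n
  have hrpow := rpow_logb goldenRatio_pos one_lt_goldenRatio.ne' (by positivity : (0 : ℝ) < a)
  rw [h, Int.cast_natCast, rpow_natCast] at hrpow
  exact (irrational_goldenRatio_pow (by rintro rfl; simp at hpos)).ne_nat a hrpow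

theorem abs_sqrt_five_mul_fib_sub_goldenRatio_pow_le_one (n : ℕ) :
    |√5 * Nat.fib n - φ ^ n| ≤ 1 := by
  have hψ : |ψ| ≤ 1 :=
    abs_le.2 ⟨neg_one_lt_goldenConj.le, (goldenConj_neg.trans one_pos).le⟩
  rw [coe_fib_eq, mul_div_cancel₀ _ (by positivity), sub_sub_cancel_left, abs_neg, abs_pow]
  exact pow_le_one₀ (abs_nonneg _) hψ

end Real

namespace Nat

theorem exists_le_fib (x : ℕ) : ∃ n, x ≤ fib n :=
  ⟨x + 5, (le_add_right x 5).trans (le_fib_self (le_add_left 5 x))⟩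

noncomputable def fibCeilIndex (x : ℕ) : ℕ := Nat.find (exists_le_fib x)

theorem fibCeilIndex_le_iff {x n : ℕ} : fibCeilIndex x ≤ n ↔ x ≤ fib n := by
  rw [fibCeilIndex, Nat.find_le_iff]
  exact ⟨fun ⟨m, hmn, hm⟩ => hm.trans (fib_mono hmn), fun h => ⟨n, le_rfl, h⟩⟩

theorem lt_fibCeilIndex_iff {x n : ℕ} : n < fibCeilIndex x ↔ fib n < x := by
  simpa only [not_le] using fibCeilIndex_le_iff.not

theorem le_fib_fibCeilIndex (x : ℕ) : x ≤ fib (fibCeilIndex x) :=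
  fibCeilIndex_le_iff.1 le_rfl

theorem fibCeilIndex_mono : Monotone fibCeilIndex := fun _ _ hxy =>
  fibCeilIndex_le_iff.2 (hxy.trans (le_fib_fibCeilIndex _))

theorem ncard_range_fib_inter_Ico {x : ℕ} (hx : 2 ≤ x) (y : ℕ) :
    (range fib ∩ Ico x y).ncard = fibCeilIndex y - fibCeilIndex x := by
  have h2 : 2 < fibCeilIndex x := lt_fibCeilIndex_iff.2 hx
  have himage : range fib ∩ Ico x y = fib '' Ico (fibCeilIndex x) (fibCeilIndex y) := by
    ext z
    simp only [mem_inter_iff, mem_range, mem_Ico, mem_image, fibCeilIndex_le_iff,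
      lt_fibCeilIndex_iff]
    constructor
    · rintro ⟨⟨n, rfl⟩, hn⟩
      exact ⟨n, hn, rfl⟩
    · rintro ⟨n, hn, rfl⟩
      exact ⟨⟨n, rfl⟩, hn⟩
  rw [himage, (fib_strictMonoOn.injOn.mono fun n hn => h2.le.trans hn.1).ncard_image,
    ncard_Ico_nat]

theorem logb_sqrt_five_mul_sub_one_le_fibCeilIndex {x : ℕ} (hx : 0 < x) :
    logb φ (√5 * x - 1) ≤ fibCeilIndex x := by
  have hx' : (1 : ℝ) ≤ x := by exact_mod_cast hx
  have hfib : (x : ℝ) ≤ fib (fibCeilIndex x) := by exact_mod_cast le_fib_fibCeilIndex x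
  have hbinet := abs_le.1 (abs_sqrt_five_mul_fib_sub_goldenRatio_pow_le_one (fibCeilIndex x))
  rw [logb_le_iff_le_rpow one_lt_goldenRatio (by nlinarith [one_lt_sqrt_five]), rpow_natCast]
  nlinarith [sqrt_nonneg 5]

theorem fibCeilIndex_lt_logb_sqrt_five_mul_add_one {x : ℕ} (hx : 0 < x) :
    (fibCeilIndex x : ℝ) < logb φ (√5 * x) + 1 := by
  obtain ⟨n, hn⟩ : ∃ n, fibCeilIndex x = n + 1 :=
    exists_eq_add_one.2 (lt_fibCeilIndex_iff.2 (fib_zero ▸ hx))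
  have hfib : (fib n : ℝ) + 1 ≤ x := by
    exact_mod_cast lt_fibCeilIndex_iff.1 (hn ▸ n.lt_add_one)
  have hbinet := abs_le.1 (abs_sqrt_five_mul_fib_sub_goldenRatio_pow_le_one n)
  rw [hn, cast_add_one, add_lt_add_iff_right,
    lt_logb_iff_rpow_lt one_lt_goldenRatio (by positivity), rpow_natCast]
  nlinarith [one_lt_sqrt_five]

theorem exists_fibCeilIndex_pow_bounds {a : ℕ} (ha : 1 < a) :
    ∃ ε : ℕ → ℝ, Tendsto ε atTop (𝓝 0) ∧ ∀ k : ℕ,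
      k * logb φ a + logb φ √5 - ε k ≤ fibCeilIndex (a ^ k) ∧
      (fibCeilIndex (a ^ k) : ℝ) < k * logb φ a + logb φ √5 + 1 := by
  have ha' : (1 : ℝ) < a := by exact_mod_cast ha
  have hlog (k : ℕ) : logb φ (√5 * (a : ℝ) ^ k) = k * logb φ a + logb φ √5 := by
    rw [logb_mul (by positivity) (by positivity), logb_pow]
    ring
  refine ⟨fun k => logb φ (√5 * (a : ℝ) ^ k) - logb φ (√5 * (a : ℝ) ^ k - 1), ?_,
    fun k => ⟨?_, ?_⟩⟩
  · have hx : Tendsto (fun k : ℕ => √5 * (a : ℝ) ^ k) atTop atTop :=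
      (tendsto_pow_atTop_atTop_of_one_lt ha').const_mul_atTop (by positivity)
    simpa [sub_eq_add_neg] using ((tendsto_logb_comp_add_sub_logb (-1)).comp hx).neg
  · have h := logb_sqrt_five_mul_sub_one_le_fibCeilIndex (pow_pos (zero_lt_one.trans ha) k)
    push_cast at h
    linarith [hlog k]
  · have h := fibCeilIndex_lt_logb_sqrt_five_mul_add_one (pow_pos (zero_lt_one.trans ha) k)
    push_cast at h
    linarith [hlog k]

end Nat

section AlmostLinear

variable {u : ℕ → ℤ} {L c : ℝ} {ε : ℕ → ℝ}

theorem eventually_sub_eq_floor_or_eq_floor_add_one (hL : 0 < Int.fract L)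
    (hε : Tendsto ε atTop (𝓝 0)) (hlow : ∀ k, k * L + c - ε k ≤ u k)
    (hup : ∀ k, (u k : ℝ) < k * L + c + 1) :
    ∀ᶠ k in atTop, u (k + 1) - u k = ⌊L⌋ ∨ u (k + 1) - u k = ⌊L⌋ + 1 := by
  filter_upwards [(tendsto_add_atTop_nat 1).eventually (hε.eventually (Iio_mem_nhds hL)),
    hε.eventually (Iio_mem_nhds (sub_pos.2 (Int.fract_lt_one L)))] with k hεk1 hεk
  have hlow1 := hlow (k + 1)
  have hup1 := hup (k + 1)
  push_cast at hlow1 hup1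
  have hfloor : (⌊L⌋ : ℝ) = L - Int.fract L := by rw [Int.fract]; ring
  have hgt : ((⌊L⌋ - 1 : ℤ) : ℝ) < (u (k + 1) - u k : ℤ) := by
    push_cast
    linarith [hup k]
  have hlt : ((u (k + 1) - u k : ℤ) : ℝ) < (⌊L⌋ + 2 : ℤ) := by
    push_cast
    linarith [hlow k]
  have := Int.cast_lt.1 hgt
  have := Int.cast_lt.1 hlt
  omega

theorem tendsto_intCast_div_of_le_of_lt (hε : Tendsto ε atTop (𝓝 0))
    (hlow : ∀ k, k * L + c - ε k ≤ u k) (hup : ∀ k, (u k : ℝ) < k * L + c + 1) :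
    Tendsto (fun N : ℕ => (u N : ℝ) / N) atTop (𝓝 L) := by
  have hL (C : ℝ) : Tendsto (fun N : ℕ => L + C / N) atTop (𝓝 L) := by
    simpa using (tendsto_const_div_atTop_nhds_zero_nat C).const_add L
  refine tendsto_of_tendsto_of_tendsto_of_le_of_le' (hL (c - 1)) (hL (c + 1)) ?_ ?_
  · filter_upwards [eventually_gt_atTop 0, hε.eventually (Iic_mem_nhds one_pos)]
      with N hN hεN
    rw [add_div' _ _ _ (by positivity), div_le_div_iff_of_pos_right (by positivity)]
    linarith [hlow N]
  · filter_upwards [eventually_gt_atTop 0] with N hN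
    rw [add_div' _ _ _ (by positivity), div_le_div_iff_of_pos_right (by positivity)]
    linarith [hup N]

end AlmostLinear

theorem tendsto_sum_range_div_of_eventually_eq_sub {f u : ℕ → ℝ} {ℓ : ℝ}
    (hf : ∀ᶠ k in atTop, f k = u (k + 1) - u k)
    (hu : Tendsto (fun N : ℕ => u N / N) atTop (𝓝 ℓ)) :
    Tendsto (fun N : ℕ => (∑ k ∈ Finset.range N, f k) / N) atTop (𝓝 ℓ) := by
  obtain ⟨K, hK⟩ := eventually_atTop.1 hf
  set C := ∑ k ∈ Finset.range K, f k - u K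
  have hsum : ∀ N ≥ K, ∑ k ∈ Finset.range N, f k = C + u N := by
    intro N hN
    induction N, hN using Nat.le_induction with
    | base => ring
    | succ N hKN ih => rw [Finset.sum_range_succ, ih, hK N hKN]; ring
  have hlim := (tendsto_const_div_atTop_nhds_zero_nat C).add hu
  rw [zero_add] at hlim
  refine hlim.congr' ?_
  filter_upwards [eventually_ge_atTop K] with N hN
  rw [hsum N hN, add_div]

theorem ncard_inter_Ico_zero_eq_sum (A : Set ℕ) [DecidablePred (· ∈ A)] (N : ℕ) :
    ((A ∩ Ico 0 N).ncard : ℝ) = ∑ k ∈ Finset.range N, if k ∈ A then 1 else 0 := by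
  have : A ∩ Ico 0 N = ↑((Finset.range N).filter (· ∈ A)) := by
    ext k
    simp [and_comm]
  rw [this, ncard_coe_finset, Finset.card_filter]
  push_cast
  rfl

theorem tendsto_ncard_inter_Ico_div_of_eventually (A : Set ℕ) (u : ℕ → ℤ) (m : ℤ) {ℓ : ℝ}
    (hstep : ∀ᶠ k in atTop, u (k + 1) - u k = m ∨ u (k + 1) - u k = m + 1)
    (hA : ∀ᶠ k in atTop, k ∈ A ↔ u (k + 1) - u k = m)
    (hu : Tendsto (fun N : ℕ => (u N : ℝ) / N) atTop (𝓝 ℓ)) :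
    Tendsto (fun N : ℕ => ((A ∩ Ico 0 N).ncard : ℝ) / N) atTop (𝓝 (m + 1 - ℓ)) := by
  classical
  simp_rw [ncard_inter_Ico_zero_eq_sum]
  refine tendsto_sum_range_div_of_eventually_eq_sub (u := fun k => (m + 1) * k - u k) ?_ ?_
  · filter_upwards [hstep, hA] with k hk hkA
    have hindicator : (if k ∈ A then 1 else 0 : ℝ) = m + 1 - (u (k + 1) - u k : ℤ) := by
      rcases hk with hk | hk <;> simp [hkA, hk]
    rw [hindicator]
    push_cast
    ring
  · refine (hu.const_sub ((m : ℝ) + 1)).congr' ?_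
    filter_upwards [eventually_ne_atTop 0] with N hN
    field_simp

/-- For an integer `a ≥ 2`, the set of natural numbers `k` for which the interval
`[a^k, a^(k+1))` contains exactly `⌊log a / log Φ⌋` Fibonacci numbers has natural density
`1 - ⟨log a / log Φ⟩`, where `⟨x⟩` is the fractional part of `x`. -/
theorem density_floor_fib_count (a : ℕ) (ha : 2 ≤ a)
    (A : Set ℕ)
    (hA : A = {k : ℕ | ((Set.range Nat.fib ∩ Set.Ico (a ^ k) (a ^ (k + 1))).ncard : ℤ)
        = ⌊Real.log a / Real.log Phi⌋}) :
    Tendsto (fun N : ℕ => (((A ∩ Set.Ico 0 N).ncard : ℝ) / N)) atTop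
      (nhds (1 - Int.fract (Real.log a / Real.log Phi))) := by
  have hL : Real.log a / Real.log Phi = logb φ a := log_div_log
  rw [hL] at hA ⊢
  set L := logb φ a
  set u : ℕ → ℤ := fun k => Nat.fibCeilIndex (a ^ k)
  obtain ⟨ε, hε, hbounds⟩ := Nat.exists_fibCeilIndex_pow_bounds ha
  have hlow (k : ℕ) : k * L + logb φ √5 - ε k ≤ u k := by simpa [u] using (hbounds k).1
  have hup (k : ℕ) : (u k : ℝ) < k * L + logb φ √5 + 1 := by simpa [u] using (hbounds k).2
  have hmem : ∀ᶠ k in atTop, k ∈ A ↔ u (k + 1) - u k = ⌊L⌋ := by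
    filter_upwards [eventually_ne_atTop 0] with k hk
    rw [hA, mem_ofPred_eq,
      Nat.ncard_range_fib_inter_Ico (ha.trans (Nat.le_self_pow hk a)),
      Nat.cast_sub (Nat.fibCeilIndex_mono (Nat.pow_le_pow_right (by omega) k.le_succ))]
  have hstep := eventually_sub_eq_floor_or_eq_floor_add_one
    (Real.fract_logb_goldenRatio_natCast_pos ha) hε hlow hup
  convert tendsto_ncard_inter_Ico_div_of_eventually A u ⌊L⌋ hstep hmem
    (tendsto_intCast_div_of_le_of_lt hε hlow hup) using 2
  rw [Int.fract]
  ring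
end

section
/- For any integer a ≥ 2, the real number (log a)/(log Φ) is irrational, where Φ = (1 + √5)/2. -/
/-!
If `log a / log Φ = p / q` in lowest terms, then `a ^ q = Φ ^ p` is rational. But every nonzero
integer power of `Φ` is irrational, since `Φ ^ (n + 1) = F(n + 1) Φ + F(n)` with Fibonacci numbers
`F(n + 1) ≠ 0` and `Φ` irrational.
-/

open Real

theorem Real.irrational_goldenRatio_pow_s5 {n : ℕ} (hn : n ≠ 0) : Irrational (goldenRatio ^ n) := by
  obtain ⟨m, rfl⟩ := Nat.exists_eq_succ_of_ne_zero hn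
  rw [← goldenRatio_mul_fib_succ_add_fib, mul_comm]
  exact (goldenRatio_irrational.natCast_mul (Nat.fib_pos.mpr m.succ_pos).ne').add_natCast _

theorem Real.irrational_goldenRatio_zpow {n : ℤ} (hn : n ≠ 0) : Irrational (goldenRatio ^ n) := by
  have hn' : n.natAbs ≠ 0 := Int.natAbs_ne_zero.mpr hn
  rcases Int.natAbs_eq n with h | h <;> rw [h]
  · simpa only [zpow_natCast] using irrational_goldenRatio_pow_s5 hn'
  · simpa only [zpow_neg, zpow_natCast] using (irrational_goldenRatio_pow_s5 hn').inv

theorem Real.pow_den_eq_zpow_num_of_log_div_log_eq {a b : ℝ} (ha : 0 < a) (hb : 0 < b)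
    (hlogb : log b ≠ 0) {r : ℚ} (h : log a / log b = r) : a ^ r.den = b ^ r.num := by
  refine log_injOn_pos (pow_pos ha _) (zpow_pos hb _) ?_
  have hloga : log a = r * log b := (div_eq_iff hlogb).mp h
  rw [log_pow, log_zpow, hloga, ← mul_assoc, mul_comm (r.den : ℝ), ← Rat.cast_natCast,
    ← Rat.cast_mul, Rat.mul_den_eq_num, Rat.cast_intCast]

theorem irrational_log_div_log_of_irrational_zpow {b : ℝ} (hb : 0 < b)
    (hpow : ∀ n : ℤ, n ≠ 0 → Irrational (b ^ n)) {a : ℚ} (ha : 0 < a) (ha1 : a ≠ 1) :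
    Irrational (log a / log b) := by
  rintro ⟨r, hr⟩
  have hlogb : log b ≠ 0 :=
    log_ne_zero_of_pos_of_ne_one hb (by simpa only [zpow_one] using (hpow 1 one_ne_zero).ne_one)
  have hloga : log (a : ℝ) ≠ 0 :=
    log_ne_zero_of_pos_of_ne_one (by exact_mod_cast ha) (by exact_mod_cast ha1)
  have hr0 : r.num ≠ 0 := by
    rw [Rat.num_ne_zero]
    rintro rfl
    exact div_ne_zero hloga hlogb (by exact_mod_cast hr.symm)
  have hpow_eq := pow_den_eq_zpow_num_of_log_div_log_eq (by exact_mod_cast ha) hb hlogb hr.symm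
  exact (hpow r.num hr0).ne_rat (a ^ r.den) (by rw [← hpow_eq]; push_cast; rfl)

/-- For every integer `a ≥ 2`, the real number `log a / log Φ` is irrational. -/
theorem irrational_log_div_log_phi (a : ℕ) (ha : 2 ≤ a) :
    Irrational (Real.log a / Real.log Phi) := by
  have hPhi : Phi = goldenRatio := rfl
  have ha' : (1 : ℚ) < a := by exact_mod_cast ha
  simpa only [hPhi, Rat.cast_natCast] using
    irrational_log_div_log_of_irrational_zpow goldenRatio_pos
      (fun _ ↦ irrational_goldenRatio_zpow) (by positivity) ha'.ne'
end

section
/- For all natural numbers n and m satisfying (n, m) ≠ (0, 1) and n + 1 ≥ m, we have F_n·⌊Φ^m⌋ ≤ F_{n+m} ≤ F_n·⌈Φ^m⌉, where Φ = (1 + √5)/2 and F_n is the n-th Fibonacci number. -/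
open Real
open scoped goldenRatio

namespace Int

def lucas (n : ℤ) : ℤ := fib (n - 1) + fib (n + 1)

theorem lucas_eq_two_mul_fib_add_one_sub_fib (n : ℤ) : lucas n = 2 * fib (n + 1) - fib n := by
  have := fib_add_two (n - 1)
  rw [sub_add_cancel, show n - 1 + 2 = n + 1 by ring] at this
  rw [lucas]; linarith

theorem coe_lucas_natCast (n : ℕ) : (lucas n : ℝ) = φ ^ n + ψ ^ n := by
  rw [lucas_eq_two_mul_fib_add_one_sub_fib, ← Nat.cast_succ, fib_natCast, fib_natCast,
    ← fib_succ_sub_goldenConj_mul_fib, ← fib_succ_sub_goldenRatio_mul_fib]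
  push_cast
  linear_combination (Nat.fib n : ℝ) * goldenRatio_add_goldenConj

theorem fib_one_sub_natCast (m : ℕ) : fib (1 - m) = (-1) ^ m * fib (m - 1) := by
  rw [← neg_sub, fib_neg]
  rcases Nat.even_or_odd m with hm | hm
  · have : ¬ Even ((m : ℤ) - 1) := by simp [hm]
    simp [this, hm.neg_one_pow]
  · have : Even ((m : ℤ) - 1) := by simpa [even_sub, Nat.not_even_iff_odd] using hm
    simp [this, hm.neg_one_pow]

theorem fib_add_add_neg_one_pow_mul_fib_sub (n : ℤ) (m : ℕ) :
    fib (n + m) + (-1) ^ m * fib (n - m) = fib n * lucas m := by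
  have h1 := fib_add n m
  rw [fib_natCast] at h1
  have h2 := fib_add n (-m)
  rw [← sub_eq_add_neg, fib_neg_natCast, neg_add_eq_sub, fib_one_sub_natCast] at h2
  have hs : ((-1 : ℤ) ^ m) ^ 2 = 1 := by rw [← pow_mul, mul_comm, pow_mul]; simp
  rw [lucas]
  linear_combination h1 + (-1) ^ m * h2 + (fib n * fib (m - 1) - fib (n - 1) * Nat.fib m) * hs

theorem fib_sub_mem_Icc {n m : ℕ} (hnm : (n, m) ≠ (0, 1)) (h : m ≤ n + 1) :
    fib (n - m) ∈ Set.Icc 0 (Nat.fib n : ℤ) := by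
  rcases h.lt_or_eq with h | rfl
  · rw [← Nat.cast_sub (Nat.le_of_lt_succ h), fib_natCast]
    exact ⟨Int.natCast_nonneg _, Nat.cast_le.2 (Nat.fib_mono (Nat.sub_le n m))⟩
  · have hn : n ≠ 0 := by rintro rfl; exact hnm rfl
    simp [Nat.one_le_iff_ne_zero, hn]

end Int

theorem abs_goldenConj_pow_lt_one {m : ℕ} (hm : m ≠ 0) : |ψ ^ m| < 1 := by
  rw [abs_pow]
  refine pow_lt_one₀ (abs_nonneg _) ?_ hm
  rw [abs_lt]
  exact ⟨neg_one_lt_goldenConj, goldenConj_neg.trans one_pos⟩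

theorem goldenRatio_pow_eq_lucas_sub (m : ℕ) : φ ^ m = Int.lucas m - ψ ^ m := by
  rw [Int.coe_lucas_natCast]; ring

section FloorCeil

variable {m : ℕ}

theorem floor_goldenRatio_pow_of_even (hm : Even m) (hm0 : m ≠ 0) :
    ⌊φ ^ m⌋ = Int.lucas m - 1 := by
  have := abs_lt.1 (abs_goldenConj_pow_lt_one hm0)
  have := hm.pow_pos goldenConj_ne_zero
  rw [Int.floor_eq_iff, goldenRatio_pow_eq_lucas_sub]
  push_cast
  constructor <;> linarith

theorem ceil_goldenRatio_pow_of_even (hm : Even m) (hm0 : m ≠ 0) :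
    ⌈φ ^ m⌉ = Int.lucas m := by
  have := abs_lt.1 (abs_goldenConj_pow_lt_one hm0)
  have := hm.pow_pos goldenConj_ne_zero
  rw [Int.ceil_eq_iff, goldenRatio_pow_eq_lucas_sub]
  constructor <;> linarith

theorem floor_goldenRatio_pow_of_odd (hm : Odd m) : ⌊φ ^ m⌋ = Int.lucas m := by
  have := abs_lt.1 (abs_goldenConj_pow_lt_one hm.pos.ne')
  have := hm.pow_neg goldenConj_neg
  rw [Int.floor_eq_iff, goldenRatio_pow_eq_lucas_sub]
  constructor <;> linarith

theorem ceil_goldenRatio_pow_of_odd (hm : Odd m) : ⌈φ ^ m⌉ = Int.lucas m + 1 := by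
  have := abs_lt.1 (abs_goldenConj_pow_lt_one hm.pos.ne')
  have := hm.pow_neg goldenConj_neg
  rw [Int.ceil_eq_iff, goldenRatio_pow_eq_lucas_sub]
  push_cast
  constructor <;> linarith

end FloorCeil

/-- For all naturals `n, m` with `(n, m) ≠ (0, 1)` and `n + 1 ≥ m`,
`F_n · ⌊Φ^m⌋ ≤ F_{n+m} ≤ F_n · ⌈Φ^m⌉`. -/
theorem fib_add_between (n m : ℕ) (hnm : (n, m) ≠ (0, 1)) (h : m ≤ n + 1) :
    (Nat.fib n : ℤ) * ⌊Phi ^ m⌋ ≤ Nat.fib (n + m) ∧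
    (Nat.fib (n + m) : ℤ) ≤ Nat.fib n * ⌈Phi ^ m⌉ := by
  rcases Nat.eq_zero_or_pos m with rfl | hm0
  · simp
  have key := Int.fib_add_add_neg_one_pow_mul_fib_sub n m
  simp only [← Nat.cast_add, Int.fib_natCast] at key
  obtain ⟨hf0, hfn⟩ := Int.fib_sub_mem_Icc hnm h
  rw [show Phi = φ from rfl]
  rcases Nat.even_or_odd m with hm | hm
  · rw [hm.neg_one_pow] at key
    rw [floor_goldenRatio_pow_of_even hm hm0.ne', ceil_goldenRatio_pow_of_even hm hm0.ne']
    constructor <;> linarith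
  · rw [hm.neg_one_pow] at key
    rw [floor_goldenRatio_pow_of_odd hm, ceil_goldenRatio_pow_of_odd hm]
    constructor <;> linarith
end

section
/- For every natural number i, the interval [Φ^i, Φ^(i+1)) contains exactly one Fibonacci number, where Φ = (1 + √5)/2. -/
open Nat (fib fib_pos)
open Real goldenRatio

theorem eq_of_mem_Ico_pow_of_mem_Ico_pow {R : Type*} [Semiring R] [LinearOrder R]
    [IsStrictOrderedRing R] {a x : R} (ha : 1 < a) {m n : ℕ}
    (hm : x ∈ Set.Ico (a ^ m) (a ^ (m + 1))) (hn : x ∈ Set.Ico (a ^ n) (a ^ (n + 1))) :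
    m = n := by
  have hmn : m < n + 1 := (pow_lt_pow_iff_right₀ ha).1 (hm.1.trans_lt hn.2)
  have hnm : n < m + 1 := (pow_lt_pow_iff_right₀ ha).1 (hn.1.trans_lt hm.2)
  omega

theorem Nat.exists_fib_eq_fib_add_two {m : ℕ} (hm : m ≠ 0) : ∃ k, fib m = fib (k + 2) := by
  match m, hm with
  | 1, _ => exact ⟨0, rfl⟩
  | k + 2, _ => exact ⟨k, rfl⟩

namespace Real

theorem fib_succ_le_goldenRatio_pow (n : ℕ) : (fib (n + 1) : ℝ) ≤ φ ^ n := by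
  have hψ : ψ * fib n ≤ 0 := mul_nonpos_of_nonpos_of_nonneg goldenConj_neg.le (Nat.cast_nonneg _)
  linarith [fib_succ_sub_goldenConj_mul_fib n]

theorem fib_add_two_lt_goldenRatio_pow_succ (n : ℕ) : (fib (n + 2) : ℝ) < φ ^ (n + 1) := by
  have hψ : ψ * fib (n + 1) < 0 :=
    mul_neg_of_neg_of_pos goldenConj_neg (Nat.cast_pos.2 (fib_pos.2 n.succ_pos))
  linarith [fib_succ_sub_goldenConj_mul_fib (n + 1)]

theorem goldenRatio_pow_le_fib_add_two (n : ℕ) : φ ^ n ≤ fib (n + 2) := by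
  have hψ : ψ * φ ^ n ≤ ψ * fib (n + 1) :=
    mul_le_mul_of_nonpos_left (fib_succ_le_goldenRatio_pow n) goldenConj_neg.le
  calc φ ^ n = φ ^ (n + 1) + ψ * φ ^ n := by
        linear_combination (-φ ^ n) * goldenRatio_add_goldenConj
    _ ≤ φ ^ (n + 1) + ψ * fib (n + 1) := by gcongr
    _ = fib (n + 2) := by linarith [fib_succ_sub_goldenConj_mul_fib (n + 1)]

theorem fib_add_two_mem_Ico_goldenRatio_pow (n : ℕ) :
    (fib (n + 2) : ℝ) ∈ Set.Ico (φ ^ n) (φ ^ (n + 1)) :=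
  ⟨goldenRatio_pow_le_fib_add_two n, fib_add_two_lt_goldenRatio_pow_succ n⟩

end Real

/-- For every natural `i`, the interval `[Φ^i, Φ^(i+1))` contains exactly one
Fibonacci number. -/
theorem unique_fib_in_phi_interval (i : ℕ) :
    (Set.range Nat.fib ∩ {n : ℕ | Phi ^ i ≤ (n : ℝ) ∧ (n : ℝ) < Phi ^ (i + 1)}).ncard
      = 1 := by
  rw [show Phi = φ from rfl]
  refine Set.ncard_eq_one.2 ⟨fib (i + 2), Set.eq_singleton_iff_unique_mem.2
    ⟨⟨⟨i + 2, rfl⟩, fib_add_two_mem_Ico_goldenRatio_pow i⟩, ?_⟩⟩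
  rintro _ ⟨⟨m, rfl⟩, hm⟩
  have hm0 : m ≠ 0 := by
    rintro rfl
    exact (pow_pos goldenRatio_pos i).not_ge (by simpa using hm.1)
  obtain ⟨k, hk⟩ := Nat.exists_fib_eq_fib_add_two hm0
  rw [hk] at hm ⊢
  rw [eq_of_mem_Ico_pow_of_mem_Ico_pow one_lt_goldenRatio
    (fib_add_two_mem_Ico_goldenRatio_pow k) hm]
end

section
/- Let a and k be positive integers. Then the number of Fibonacci numbers lying strictly between the consecutive powers a^k and a^(k+1) is at most a. -/
lemma fib_aux (n a : ℕ) : Nat.fib n * a + Nat.fib (n + 1) ≤ Nat.fib (n + a + 1) := by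
  induction a with
  | zero => simp
  | succ a ih =>
    have h1 : Nat.fib n ≤ Nat.fib (n + a) := Nat.fib_mono (Nat.le_add_right _ _)
    have he : n + (a + 1) + 1 = (n + a) + 2 := by ring
    rw [he, Nat.fib_add_two]
    calc Nat.fib n * (a + 1) + Nat.fib (n + 1)
        = (Nat.fib n * a + Nat.fib (n + 1)) + Nat.fib n := by ring
      _ ≤ Nat.fib (n + a + 1) + Nat.fib (n + a) := Nat.add_le_add ih h1
      _ = Nat.fib (n + a) + Nat.fib (n + a + 1) := by ring

/-- Honsberger's theorem: for positive integers `a` and `k`, at most `a` Fibonacci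
numbers lie strictly between the consecutive powers `a^k` and `a^(k+1)`. -/
theorem fib_count_between_powers_le (a k : ℕ) (ha : 1 ≤ a) (hk : 1 ≤ k) :
    (Set.range Nat.fib ∩ Set.Ioo (a ^ k) (a ^ (k + 1))).ncard ≤ a := by
  rcases eq_or_lt_of_le ha with h | ha2
  · simp [← h]
  · have hak : 2 ≤ a ^ k := le_trans ha2 (Nat.le_self_pow (by omega) a)
    have hex : ∃ n, a ^ k < Nat.fib n := by
      refine ⟨max 5 (a ^ k + 1), ?_⟩
      calc a ^ k < a ^ k + 1 := Nat.lt_succ_self _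
        _ ≤ max 5 (a ^ k + 1) := le_max_right _ _
        _ ≤ Nat.fib (max 5 (a ^ k + 1)) := Nat.le_fib_self (le_max_left _ _)
    set n₀ := Nat.find hex with hn₀def
    have h₀ : a ^ k < Nat.fib n₀ := Nat.find_spec hex
    have hmin : ∀ m < n₀, Nat.fib m ≤ a ^ k := fun m hm => not_lt.mp (Nat.find_min hex hm)
    have hn₀2 : 2 ≤ n₀ := by
      by_contra hcon
      push_neg at hcon
      have h2 : Nat.fib n₀ ≤ Nat.fib 2 := Nat.fib_mono (by omega)
      rw [Nat.fib_two] at h2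
      omega
    have hsub : Set.range Nat.fib ∩ Set.Ioo (a ^ k) (a ^ (k + 1)) ⊆
        Nat.fib '' Set.Ico n₀ (n₀ + a) := by
      rintro x ⟨⟨m, rfl⟩, hm1, hm2⟩
      refine ⟨m, ⟨?_, ?_⟩, rfl⟩
      · by_contra hlt
        push_neg at hlt
        exact absurd (hmin m hlt) (not_le.mpr hm1)
      · by_contra hge
        push_neg at hge
        have hmono : Nat.fib (n₀ + a) ≤ Nat.fib m := Nat.fib_mono hge
        have key : Nat.fib n₀ * (a - 1) + Nat.fib (n₀ + 1) ≤ Nat.fib (n₀ + a) := by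
          have := fib_aux n₀ (a - 1)
          rwa [show n₀ + (a - 1) + 1 = n₀ + a by omega] at this
        have hstr : Nat.fib n₀ < Nat.fib (n₀ + 1) := Nat.fib_lt_fib_succ hn₀2
        have heq : Nat.fib n₀ * (a - 1) + Nat.fib n₀ = a * Nat.fib n₀ := by
          cases a with
          | zero => omega
          | succ b => simp [Nat.succ_sub_one]; ring
        have h1 : a * Nat.fib n₀ < Nat.fib (n₀ + a) := by omega
        have h2 : a ^ (k + 1) < a * Nat.fib n₀ := by
          rw [pow_succ, mul_comm]
          exact mul_lt_mul_of_pos_left h₀ (by omega)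
        omega
    calc (Set.range Nat.fib ∩ Set.Ioo (a ^ k) (a ^ (k + 1))).ncard
        ≤ (Nat.fib '' Set.Ico n₀ (n₀ + a)).ncard :=
          Set.ncard_le_ncard hsub ((Set.finite_Ico _ _).image _)
      _ ≤ (Set.Ico n₀ (n₀ + a)).ncard := Set.ncard_image_le (Set.finite_Ico _ _)
      _ = a := by
          rw [← Finset.coe_Ico, Set.ncard_coe_finset, Nat.card_Ico]
          omega
end
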